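/- arXiv:1909.07527 — 2 statements merged into one kernel-verified Lean document; each statement's English description precedes it below -/
import Mathlib

section
/- A sequence (x_n) of real numbers is a Benford sequence if and only if for every m ∈ ℕ, every d_1 ∈ {1,...,9}, and all d_2,...,d_m ∈ {0,...,9}, the limiting proportion lim_{N→∞} #{1 ≤ n ≤ N : D_1(x_n) = d_1, D_2(x_n) = d_2, ..., D_m(x_n) = d_m}/N exists and equals log₁₀(1 + 1/(10^{m-1}·d_1 + 10^{m-2}·d_2 + ... + d_m)). -/
open MeasureTheory Filter

/-- The decimal significand of a real number: for `x ≠ 0`, the unique `t ∈ [1,10)`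
with `|x| = 10 ^ k * t` for some integer `k`; and `S 0 = 0`. -/
noncomputable def S (x : ℝ) : ℝ :=
  if x = 0 then 0 else (10 : ℝ) ^ (Int.fract (Real.logb 10 |x|))

/-- The `m`-th significant decimal digit: `D 1 x = ⌊S x⌋` and for `m ≥ 2`,
`D m x = ⌊10 ^ (m-1) * S x⌋ mod 10` (the uniform formula also gives `D 1`). -/
noncomputable def D (m : ℕ) (x : ℝ) : ℤ :=
  ⌊(10 : ℝ) ^ (m - 1) * S x⌋ % 10

/-- The number of indices `n` with `1 ≤ n ≤ N` satisfying the property `p`. -/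
noncomputable def countIn (N : ℕ) (p : ℕ → Prop) : ℕ :=
  Nat.card {n : ℕ | 1 ≤ n ∧ n ≤ N ∧ p n}

/-- A sequence `(x n)` (indexed by `n ≥ 1`) is Benford if for every `t ∈ [1,10)` the
limiting proportion of indices with `S (x n) ≤ t` equals `log₁₀ t`. -/
def BenfordSeq (x : ℕ → ℝ) : Prop :=
  ∀ t : ℝ, 1 ≤ t → t < 10 →
    Tendsto (fun N : ℕ => (countIn N (fun n => S (x n) ≤ t) : ℝ) / N)
      atTop (nhds (Real.logb 10 t))

/-- A sequence `(y n)` (indexed by `n ≥ 1`) is uniformly distributed modulo one. -/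
def UnifModOne (y : ℕ → ℝ) : Prop :=
  ∀ s : ℝ, 0 ≤ s → s ≤ 1 →
    Tendsto (fun N : ℕ => (countIn N (fun n => Int.fract (y n) ≤ s) : ℝ) / N)
      atTop (nhds s)

/-- A random variable `X` on `(Ω, μ)` is Benford if `P(S(X) ≤ t) = log₁₀ t`
for all `t ∈ [1,10)`. -/
def BenfordRV {Ω : Type*} [MeasurableSpace Ω] (μ : Measure Ω) (X : Ω → ℝ) : Prop :=
  ∀ t : ℝ, 1 ≤ t → t < 10 →
    μ {ω | S (X ω) ≤ t} = ENNReal.ofReal (Real.logb 10 t)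

/-- Two real-valued random variables are identically distributed (equal CDFs). -/
def SameDist {Ω : Type*} [MeasurableSpace Ω] (μ : Measure Ω) (U V : Ω → ℝ) : Prop :=
  ∀ t : ℝ, μ {ω | U ω ≤ t} = μ {ω | V ω ≤ t}

/-- `X` has scale-invariant significant digits: `S (a • X)` and `S X` are identically
distributed for every `a > 0`. -/
def ScaleInvSig {Ω : Type*} [MeasurableSpace Ω] (μ : Measure Ω) (X : Ω → ℝ) : Prop :=
  ∀ a : ℝ, 0 < a → SameDist μ (fun ω => S (a * X ω)) (fun ω => S (X ω))

/-- `X` has base-invariant significant digits: `S (X ^ n)` and `S X` are identically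
distributed for every positive integer `n`. -/
def BaseInvSig {Ω : Type*} [MeasurableSpace Ω] (μ : Measure Ω) (X : Ω → ℝ) : Prop :=
  ∀ n : ℕ, 1 ≤ n → SameDist μ (fun ω => S (X ω ^ n)) (fun ω => S (X ω))

/-- A real number `a` is a rational power of `10` if `a = 10 ^ (m/k)` for some
integers `m, k` with `k ≠ 0`. -/
def IsRatPowTen (a : ℝ) : Prop :=
  ∃ m k : ℤ, k ≠ 0 ∧ a = (10 : ℝ) ^ ((m : ℝ) / (k : ℝ))

/-!
Prescribing the first `p + 1` significant digits of `x` amounts to prescribing the integer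
`K = ⌊10 ^ p * S x⌋ ∈ [10 ^ p, 10 ^ (p + 1))`, i.e. to `S x ∈ [K / 10 ^ p, (K + 1) / 10 ^ p)`, an
interval of logarithmic length `log₁₀ (1 + 1 / K)`. So both sides of the equivalence say that each
such block has frequency `log₁₀ (K + 1) - log₁₀ K`. For a Benford sequence this is a difference of
two values of the limiting distribution function, once `S < b` is approximated by `S ≤ b'` from
below. Conversely, summing block frequencies gives the frequency of
`S ∈ [1, ⌊10 ^ p t⌋ / 10 ^ p)`, and these intervals, together with the frequency-zero set `S = 0`,
squeeze `S ≤ t` to within `10 ^ (-p)`.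
-/

open Real Finset Topology

noncomputable def freqIn (N : ℕ) (p : ℕ → Prop) : ℝ := countIn N p / N

lemma countIn_eq_card (N : ℕ) (p : ℕ → Prop) [DecidablePred p] :
    countIn N p = #{n ∈ Icc 1 N | p n} := by
  rw [← Nat.card_eq_finsetCard, countIn]
  exact Nat.card_congr (Equiv.subtypeEquivRight fun n => by simp [and_assoc])

section Frequency

variable {N : ℕ} {p q : ℕ → Prop}

lemma freqIn_nonneg : 0 ≤ freqIn N p := by
  unfold freqIn; positivity

lemma freqIn_le_one : freqIn N p ≤ 1 := by
  classical
  refine div_le_one_of_le₀ ?_ N.cast_nonneg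
  rw [countIn_eq_card]
  exact_mod_cast (card_filter_le _ _).trans (Nat.card_Icc 1 N).le

lemma freqIn_mono (h : ∀ n, p n → q n) : freqIn N p ≤ freqIn N q := by
  classical
  unfold freqIn
  rw [countIn_eq_card, countIn_eq_card]
  gcongr with n
  exact h n

lemma freqIn_congr (h : ∀ n, p n ↔ q n) : freqIn N p = freqIn N q := by
  rw [funext fun n => propext (h n)]

lemma freqIn_false : freqIn N (fun _ => False) = 0 := by
  classical
  simp [freqIn, countIn_eq_card]

lemma freqIn_or (h : ∀ n, p n → ¬ q n) :
    freqIn N (fun n => p n ∨ q n) = freqIn N p + freqIn N q := by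
  classical
  simp only [freqIn, countIn_eq_card, filter_or, ← add_div]
  rw [card_union_of_disjoint (disjoint_filter.2 fun n _ => h n)]
  push_cast
  rfl

lemma freqIn_or_le : freqIn N (fun n => p n ∨ q n) ≤ freqIn N p + freqIn N q := by
  classical
  simp only [freqIn, countIn_eq_card, filter_or, ← add_div]
  gcongr
  exact_mod_cast card_union_le _ _

end Frequency

section Approximation

variable {α β ι : Type*} [LinearOrder α] [TopologicalSpace α] [OrderTopology α]
  {l : Filter β} {F : Filter ι} [F.NeBot] {u : β → α} {v : ι → β → α} {c : ι → α} {a b : α}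

lemma eventually_lt_of_lower_approx (hc : Tendsto c F (𝓝 b)) (hab : a < b)
    (hv : ∀ᶠ i in F, Tendsto (v i) l (𝓝 (c i)) ∧ ∀ n, v i n ≤ u n) :
    ∀ᶠ n in l, a < u n := by
  obtain ⟨i, hai, hvi, hle⟩ := ((hc.eventually (lt_mem_nhds hab)).and hv).exists
  exact (hvi.eventually (lt_mem_nhds hai)).mono fun n hn => hn.trans_le (hle n)

lemma eventually_gt_of_upper_approx (hc : Tendsto c F (𝓝 a)) (hab : a < b)
    (hv : ∀ᶠ i in F, Tendsto (v i) l (𝓝 (c i)) ∧ ∀ n, u n ≤ v i n) :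
    ∀ᶠ n in l, u n < b := by
  obtain ⟨i, hib, hvi, hle⟩ := ((hc.eventually (gt_mem_nhds hab)).and hv).exists
  exact (hvi.eventually (gt_mem_nhds hib)).mono fun n hn => (hle n).trans_lt hn

end Approximation

def blockValue (m : ℕ) (d : ℕ → ℕ) : ℕ := ∑ j ∈ Icc 1 m, d j * 10 ^ (m - j)

section BlockValue

variable {m : ℕ} {d e : ℕ → ℕ}

lemma blockValue_one (d : ℕ → ℕ) : blockValue 1 d = d 1 := by
  simp [blockValue]

lemma blockValue_succ (m : ℕ) (d : ℕ → ℕ) :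
    blockValue (m + 1) d = 10 * blockValue m d + d (m + 1) := by
  rw [blockValue, sum_Icc_succ_top (by omega), blockValue, mul_sum, Nat.sub_self, pow_zero,
    mul_one]
  congr 1
  refine sum_congr rfl fun j hj => ?_
  rw [show m + 1 - j = m - j + 1 by grind, pow_succ]
  ring

lemma blockValue_congr (h : ∀ j, 1 ≤ j → j ≤ m → d j = e j) : blockValue m d = blockValue m e :=
  sum_congr rfl fun j hj => by rw [h j (mem_Icc.1 hj).1 (mem_Icc.1 hj).2]

lemma blockValue_lt_ten_pow (hd : ∀ j, 1 ≤ j → j ≤ m → d j ≤ 9) : blockValue m d < 10 ^ m := by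
  induction m with
  | zero => simp [blockValue]
  | succ m ih =>
    have := ih fun j h1 h2 => hd j h1 (by omega)
    have := hd (m + 1) (by omega) le_rfl
    rw [blockValue_succ, pow_succ]
    omega

lemma ten_pow_le_blockValue (hd1 : 1 ≤ d 1) (p : ℕ) : 10 ^ p ≤ blockValue (p + 1) d := by
  induction p with
  | zero => simpa [blockValue_one] using hd1
  | succ p ih =>
    rw [blockValue_succ, pow_succ]
    omega

lemma blockValue_digits (m K : ℕ) :
    blockValue m (fun j => K / 10 ^ (m - j) % 10) = K % 10 ^ m := by
  induction m generalizing K with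
  | zero => simp [blockValue, Nat.mod_one]
  | succ m ih =>
    rw [blockValue_succ, blockValue_congr (e := fun j => K / 10 / 10 ^ (m - j) % 10), ih,
      Nat.sub_self, pow_zero, Nat.div_one, pow_succ', Nat.mod_mul]
    · ring
    · intro j _ hj
      rw [Nat.div_div_eq_div_mul, ← pow_succ', show m + 1 - j = m - j + 1 by omega]

lemma exists_blockValue_eq {p K : ℕ} (h1 : 10 ^ p ≤ K) (h2 : K < 10 ^ (p + 1)) :
    ∃ d : ℕ → ℕ, 1 ≤ d 1 ∧ (∀ j, d j ≤ 9) ∧ blockValue (p + 1) d = K := by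
  refine ⟨fun j => K / 10 ^ (p + 1 - j) % 10, ?_,
    fun j => Nat.lt_succ_iff.1 (Nat.mod_lt _ (by norm_num)), ?_⟩
  · have hlt : K / 10 ^ p < 10 := Nat.div_lt_of_lt_mul (by rwa [← pow_succ])
    simp only [Nat.add_sub_cancel, Nat.mod_eq_of_lt hlt]
    exact (Nat.le_div_iff_mul_le (by positivity)).2 (by simpa using h1)
  · rw [blockValue_digits, Nat.mod_eq_of_lt h2]

end BlockValue

section Significand

lemma S_nonneg (x : ℝ) : 0 ≤ S x := by
  unfold S
  split_ifs
  exacts [le_rfl, by positivity]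

lemma S_lt_ten (x : ℝ) : S x < 10 := by
  unfold S
  split_ifs
  · norm_num
  · simpa using rpow_lt_rpow_of_exponent_lt (by norm_num : (1 : ℝ) < 10) (Int.fract_lt_one _)

lemma S_eq_zero_or_one_le (x : ℝ) : S x = 0 ∨ 1 ≤ S x := by
  unfold S
  split_ifs
  exacts [Or.inl rfl, Or.inr (one_le_rpow (by norm_num) (Int.fract_nonneg _))]

lemma D_nonneg (m : ℕ) (x : ℝ) : 0 ≤ D m x := Int.emod_nonneg _ (by norm_num)

lemma D_lt_ten (m : ℕ) (x : ℝ) : D m x < 10 := Int.emod_lt_of_pos _ (by norm_num)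

lemma D_one (x : ℝ) : D 1 x = ⌊S x⌋ := by
  rw [D, Nat.sub_self, pow_zero, one_mul]
  exact Int.emod_eq_of_lt (Int.floor_nonneg.2 (S_nonneg x))
    (Int.floor_lt.2 (by exact_mod_cast S_lt_ten x))

lemma floor_ten_mul (y : ℝ) : ⌊10 * y⌋ = 10 * ⌊y⌋ + ⌊10 * y⌋ % 10 := by
  have h : ⌊10 * y⌋ / 10 = ⌊y⌋ := by
    simpa using (Int.floor_div_natCast (10 * y) 10).symm
  rw [← h, Int.mul_ediv_add_emod]

lemma floor_ten_pow_succ_mul_S (p : ℕ) (x : ℝ) :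
    ⌊(10 : ℝ) ^ (p + 1) * S x⌋ = 10 * ⌊(10 : ℝ) ^ p * S x⌋ + D (p + 2) x := by
  rw [D, show p + 2 - 1 = p + 1 by omega, pow_succ', mul_assoc]
  exact floor_ten_mul _

lemma digits_eq_iff_floor_eq {x : ℝ} {d : ℕ → ℕ} {p : ℕ}
    (hd : ∀ j, 1 ≤ j → j ≤ p + 1 → d j ≤ 9) :
    (∀ j, 1 ≤ j → j ≤ p + 1 → D j x = d j) ↔ ⌊(10 : ℝ) ^ p * S x⌋ = blockValue (p + 1) d := by
  induction p with
  | zero =>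
    have single : (∀ j, 1 ≤ j → j ≤ 0 + 1 → D j x = d j) ↔ D 1 x = d 1 :=
      ⟨fun h => h 1 le_rfl le_rfl, fun h j h1 h2 => by rwa [show j = 1 by omega]⟩
    rw [single, D_one, pow_zero, one_mul, blockValue_one]
  | succ p ih =>
    have split : (∀ j, 1 ≤ j → j ≤ p + 2 → D j x = d j) ↔
        (∀ j, 1 ≤ j → j ≤ p + 1 → D j x = d j) ∧ D (p + 2) x = d (p + 2) :=
      ⟨fun h => ⟨fun j h1 h2 => h j h1 (by omega), h _ (by omega) le_rfl⟩,
        fun ⟨h, hlast⟩ j h1 h2 => by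
          rcases Nat.lt_or_eq_of_le h2 with h2 | rfl
          exacts [h j h1 (by omega), hlast]⟩
    rw [split, ih fun j h1 h2 => hd j h1 (by omega), floor_ten_pow_succ_mul_S,
      blockValue_succ (p + 1), show p + 1 + 1 = p + 2 from rfl]
    have := D_nonneg (p + 2) x
    have := D_lt_ten (p + 2) x
    have := hd (p + 2) (by omega) le_rfl
    push_cast
    omega

end Significand

def LeadingBlockLaw (x : ℕ → ℝ) : Prop :=
  ∀ p K : ℕ, 10 ^ p ≤ K → K < 10 ^ (p + 1) →
    Tendsto (fun N => freqIn N fun n => ⌊(10 : ℝ) ^ p * S (x n)⌋ = K) atTop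
      (𝓝 (logb 10 (K + 1) - logb 10 K))

section Benford

variable {x : ℕ → ℝ}

lemma tendsto_freqIn_S_lt (hB : BenfordSeq x) {t : ℝ} (ht1 : 1 ≤ t) (ht10 : t ≤ 10) :
    Tendsto (fun N => freqIn N fun n => S (x n) < t) atTop (𝓝 (logb 10 t)) := by
  refine tendsto_order.2 ⟨fun a ha => ?_, fun b hb => ?_⟩
  · rcases ht1.eq_or_lt with rfl | ht1
    · rw [logb_one] at ha
      exact Eventually.of_forall fun N => ha.trans_le freqIn_nonneg
    · refine eventually_lt_of_lower_approx (F := 𝓝[<] t)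
        (v := fun u N => freqIn N fun n => S (x n) ≤ u)
        ((continuousAt_logb (by positivity)).tendsto.mono_left nhdsWithin_le_nhds) ha ?_
      filter_upwards [Ioo_mem_nhdsLT ht1] with u hu
      exact ⟨hB u hu.1.le (hu.2.trans_le ht10), fun N => freqIn_mono fun n hn => hn.trans_lt hu.2⟩
  · rcases ht10.lt_or_eq with ht10 | rfl
    · filter_upwards [(hB t ht1 ht10).eventually (gt_mem_nhds hb)] with N hN
      exact (freqIn_mono fun n => le_of_lt).trans_lt hN
    · rw [logb_self_eq_one (by norm_num)] at hb
      exact Eventually.of_forall fun N => freqIn_le_one.trans_lt hb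

lemma tendsto_freqIn_S_mem_Ico (hB : BenfordSeq x) {a b : ℝ} (ha : 1 ≤ a) (hab : a ≤ b)
    (hb : b ≤ 10) :
    Tendsto (fun N => freqIn N fun n => a ≤ S (x n) ∧ S (x n) < b) atTop
      (𝓝 (logb 10 b - logb 10 a)) := by
  have split : ∀ N, freqIn N (fun n => S (x n) < b) =
      freqIn N (fun n => S (x n) < a) + freqIn N (fun n => a ≤ S (x n) ∧ S (x n) < b) := by
    intro N
    rw [← freqIn_or fun n h h' => h'.1.not_gt h]
    exact freqIn_congr fun n => ⟨fun h => (lt_or_ge (S (x n)) a).imp_right fun h' => ⟨h', h⟩,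
      fun h => h.elim (fun h => h.trans_le hab) And.right⟩
  simp_rw [eq_sub_of_add_eq' (split _).symm]
  exact (tendsto_freqIn_S_lt hB (ha.trans hab) hb).sub (tendsto_freqIn_S_lt hB ha (hab.trans hb))

lemma leadingBlockLaw_of_benfordSeq (hB : BenfordSeq x) : LeadingBlockLaw x := by
  intro p K hK1 hK2
  have h10 : (0 : ℝ) < 10 ^ p := by positivity
  have hK1' : (10 : ℝ) ^ p ≤ K := by exact_mod_cast hK1
  have hK2' : (K : ℝ) + 1 ≤ 10 * 10 ^ p := by rw [← pow_succ']; exact_mod_cast hK2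
  have block : ∀ s : ℝ, ⌊10 ^ p * s⌋ = (K : ℤ) ↔ K / 10 ^ p ≤ s ∧ s < (K + 1) / 10 ^ p := by
    intro s
    rw [Int.floor_eq_iff, div_le_iff₀' h10, lt_div_iff₀' h10]
    push_cast
    rfl
  simp_rw [block]
  convert tendsto_freqIn_S_mem_Ico hB ((one_le_div h10).2 hK1') (by gcongr; linarith)
    ((div_le_iff₀ h10).2 hK2') using 2
  have hK : (0 : ℝ) < K := h10.trans_le hK1'
  rw [logb_div (by positivity) h10.ne', logb_div hK.ne' h10.ne']
  ring

lemma tendsto_freqIn_Ico_of_tendsto_freqIn_eq {k : ℕ → ℤ} {g : ℕ → ℝ} {A B : ℕ}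
    (h : ∀ K, A ≤ K → K < B →
      Tendsto (fun N => freqIn N fun n => k n = K) atTop (𝓝 (g (K + 1) - g K)))
    {L : ℕ} (hAL : A ≤ L) (hLB : L ≤ B) :
    Tendsto (fun N => freqIn N fun n => A ≤ k n ∧ k n < L) atTop (𝓝 (g L - g A)) := by
  induction L, hAL using Nat.le_induction with
  | base =>
    have empty : ∀ N, freqIn N (fun n => (A : ℤ) ≤ k n ∧ k n < A) = 0 := fun N =>
      (freqIn_congr fun n => iff_false_intro fun h => h.1.not_gt h.2).trans freqIn_false
    simp [empty]
  | succ L hAL ih =>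
    have split : ∀ N, freqIn N (fun n => (A : ℤ) ≤ k n ∧ k n < (L + 1 : ℕ)) =
        freqIn N (fun n => A ≤ k n ∧ k n < L) + freqIn N fun n => k n = L := by
      intro N
      rw [← freqIn_or fun n h h' => h.2.ne h']
      push_cast
      refine freqIn_congr fun n => ⟨fun h => ?_, fun h => ?_⟩ <;> omega
    simp_rw [split]
    convert (ih (by omega)).add (h L hAL (by omega)) using 2
    ring

lemma LeadingBlockLaw.tendsto_freqIn_Ico (h : LeadingBlockLaw x) (p : ℕ) {L : ℕ}
    (h1 : 10 ^ p ≤ L) (h2 : L ≤ 10 ^ (p + 1)) :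
    Tendsto (fun N => freqIn N fun n => (10 : ℤ) ^ p ≤ ⌊(10 : ℝ) ^ p * S (x n)⌋ ∧
      ⌊(10 : ℝ) ^ p * S (x n)⌋ < L) atTop (𝓝 (logb 10 (L / 10 ^ p))) := by
  have hL : (0 : ℝ) < L := by exact_mod_cast (Nat.pow_pos (by norm_num)).trans_le h1
  rw [logb_div hL.ne' (by positivity)]
  simpa using tendsto_freqIn_Ico_of_tendsto_freqIn_eq (g := fun K : ℕ => logb 10 K)
    (fun K h1 h2 => by simpa using h p K h1 h2) h1 h2

lemma LeadingBlockLaw.tendsto_freqIn_S_eq_zero (h : LeadingBlockLaw x) :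
    Tendsto (fun N => freqIn N fun n => S (x n) = 0) atTop (𝓝 0) := by
  have nonzero := h.tendsto_freqIn_Ico 0 (L := 10) (by norm_num) (by norm_num)
  norm_num at nonzero
  have hle : ∀ N, freqIn N (fun n => S (x n) = 0) ≤
      1 - freqIn N fun n => 1 ≤ ⌊S (x n)⌋ ∧ ⌊S (x n)⌋ < 10 := by
    intro N
    have := freqIn_or (N := N) (p := fun n => S (x n) = 0)
      (q := fun n => 1 ≤ ⌊S (x n)⌋ ∧ ⌊S (x n)⌋ < 10) fun n h0 h1 => by simp [h0] at h1
    linarith [freqIn_le_one (N := N)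
      (p := fun n => S (x n) = 0 ∨ 1 ≤ ⌊S (x n)⌋ ∧ ⌊S (x n)⌋ < 10)]
  refine tendsto_of_tendsto_of_tendsto_of_le_of_le tendsto_const_nhds ?_
    (fun N => freqIn_nonneg) hle
  simpa using nonzero.const_sub 1

lemma benfordSeq_of_leadingBlockLaw (h : LeadingBlockLaw x) : BenfordSeq x := by
  intro t ht1 ht10
  set K : ℕ → ℕ := fun p => ⌊t * 10 ^ p⌋₊ with hK
  have h10 : ∀ p : ℕ, (0 : ℝ) < 10 ^ p := fun p => by positivity
  have hK1 : ∀ p, 10 ^ p ≤ K p := fun p =>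
    Nat.le_floor (by push_cast; nlinarith [h10 p])
  have hK2 : ∀ p, K p < 10 ^ (p + 1) := fun p =>
    (Nat.floor_lt (by positivity)).2 (by push_cast; rw [pow_succ']; nlinarith [h10 p])
  have ratio : Tendsto (fun p => (K p : ℝ) / 10 ^ p) atTop (𝓝 t) :=
    (tendsto_nat_floor_mul_div_atTop (by linarith)).comp
      (tendsto_pow_atTop_atTop_of_one_lt (by norm_num))
  have ratio_succ : Tendsto (fun p => ((K p + 1 : ℕ) : ℝ) / 10 ^ p) atTop (𝓝 t) := by
    have := ratio.add
      (tendsto_pow_atTop_atTop_of_one_lt (by norm_num : (1 : ℝ) < 10)).inv_tendsto_atTop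
    simpa [add_div] using this
  have hlogb := (continuousAt_logb (b := 10) (by positivity : t ≠ 0)).tendsto
  have below : ∀ p n, (10 : ℤ) ^ p ≤ ⌊(10 : ℝ) ^ p * S (x n)⌋ ∧
      ⌊(10 : ℝ) ^ p * S (x n)⌋ < K p → S (x n) ≤ t := by
    rintro p n ⟨-, hlt⟩
    have := (Int.floor_lt.1 hlt).trans_le (Nat.floor_le (by positivity))
    nlinarith [h10 p]
  have above : ∀ p n, S (x n) ≤ t → ((10 : ℤ) ^ p ≤ ⌊(10 : ℝ) ^ p * S (x n)⌋ ∧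
      ⌊(10 : ℝ) ^ p * S (x n)⌋ < (K p + 1 : ℕ)) ∨ S (x n) = 0 := by
    intro p n hn
    refine (S_eq_zero_or_one_le (x n)).symm.imp (fun h1 => ⟨?_, ?_⟩) id
    · exact Int.le_floor.2 (by push_cast; nlinarith [h10 p])
    · rw [Nat.cast_succ, Int.lt_add_one_iff, hK, Int.natCast_floor_eq_floor (by positivity)]
      exact Int.floor_le_floor (by nlinarith [h10 p])
  refine tendsto_order.2 ⟨fun a ha => ?_, fun b hb => ?_⟩
  · exact eventually_lt_of_lower_approx (hlogb.comp ratio) ha <| Eventually.of_forall fun p =>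
      ⟨h.tendsto_freqIn_Ico p (hK1 p) (hK2 p).le, fun N => freqIn_mono (below p)⟩
  · refine eventually_gt_of_upper_approx
      (by simpa [Function.comp_def] using hlogb.comp ratio_succ) hb <|
      Eventually.of_forall fun p => ⟨(h.tendsto_freqIn_Ico p ((hK1 p).trans (Nat.le_succ _))
        (hK2 p)).add h.tendsto_freqIn_S_eq_zero,
        fun N => (freqIn_mono (above p)).trans freqIn_or_le⟩

theorem benfordSeq_iff_leadingBlockLaw : BenfordSeq x ↔ LeadingBlockLaw x :=
  ⟨leadingBlockLaw_of_benfordSeq, benfordSeq_of_leadingBlockLaw⟩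

end Benford

lemma tendsto_freqIn_digits_iff {x : ℕ → ℝ} {p : ℕ} {d : ℕ → ℕ} (hd1 : 1 ≤ d 1)
    (hd : ∀ j, 1 ≤ j → j ≤ p + 1 → d j ≤ 9) :
    Tendsto (fun N => freqIn N fun n => ∀ j, 1 ≤ j → j ≤ p + 1 → D j (x n) = d j) atTop
        (𝓝 (logb 10 (1 + 1 / ∑ j ∈ Icc 1 (p + 1), (10 : ℝ) ^ (p + 1 - j) * d j))) ↔
      Tendsto (fun N => freqIn N fun n => ⌊(10 : ℝ) ^ p * S (x n)⌋ = blockValue (p + 1) d) atTop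
        (𝓝 (logb 10 (blockValue (p + 1) d + 1) - logb 10 (blockValue (p + 1) d))) := by
  have hK : (0 : ℝ) < blockValue (p + 1) d := by
    exact_mod_cast (Nat.pow_pos (by norm_num)).trans_le (ten_pow_le_blockValue hd1 p)
  have hsum : ∑ j ∈ Icc 1 (p + 1), (10 : ℝ) ^ (p + 1 - j) * d j = blockValue (p + 1) d := by
    simp [blockValue, mul_comm]
  simp only [digits_eq_iff_floor_eq hd, hsum, one_add_div hK.ne',
    logb_div (by positivity : (blockValue (p + 1) d : ℝ) + 1 ≠ 0) hK.ne']

/-- A sequence of reals is Benford iff all finite blocks of leading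
significant digits have the logarithmic limiting proportions. -/
theorem benfordSeq_iff_digit_frequencies (x : ℕ → ℝ) :
    BenfordSeq x ↔
      ∀ m : ℕ, 1 ≤ m → ∀ d : ℕ → ℕ,
        1 ≤ d 1 → d 1 ≤ 9 → (∀ j, 2 ≤ j → j ≤ m → d j ≤ 9) →
        Tendsto (fun N : ℕ =>
            (countIn N (fun n => ∀ j, 1 ≤ j → j ≤ m → D j (x n) = (d j : ℤ)) : ℝ) / N)
          atTop
          (nhds (Real.logb 10
            (1 + 1 / ∑ j ∈ Finset.Icc 1 m, (10 : ℝ) ^ (m - j) * (d j : ℝ)))) := by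
  rw [benfordSeq_iff_leadingBlockLaw]
  constructor
  · intro h m hm d hd1 hd9 hd
    obtain ⟨p, rfl⟩ : ∃ p, m = p + 1 := ⟨m - 1, by omega⟩
    have hd' : ∀ j, 1 ≤ j → j ≤ p + 1 → d j ≤ 9 := fun j h1 h2 => by
      rcases h1.eq_or_lt with rfl | h1
      exacts [hd9, hd j h1 h2]
    exact (tendsto_freqIn_digits_iff hd1 hd').2
      (h p _ (ten_pow_le_blockValue hd1 p) (blockValue_lt_ten_pow hd'))
  · intro h p K hK1 hK2
    obtain ⟨d, hd1, hd9, rfl⟩ := exists_blockValue_eq hK1 hK2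
    exact (tendsto_freqIn_digits_iff hd1 fun j _ _ => hd9 j).1
      (h (p + 1) p.succ_pos d hd1 (hd9 1) fun j _ _ => hd9 j)
end

section
/- Let X_1, X_2, ... be independent positive real-valued random variables. If X_j is Benford for some j ∈ ℕ, then the product X_1 · X_2 · ... · X_m is Benford for every m ≥ j. -/
open MeasureTheory Filter

/-!
Writing `Y = log₁₀ X`, a nonzero `X` is Benford exactly when `Y mod 1` is uniformly distributed,
i.e. when the law of `Y` pushed to the circle `ℝ/ℤ` is Haar measure. Since
`log₁₀ (X₁ ⋯ Xₘ) = log₁₀ Xⱼ + log₁₀ (∏_{i ≠ j} Xᵢ)` with independent summands, the law of the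
product on the circle is the convolution of some probability measure with Haar measure, which is
Haar measure again by translation invariance.
-/

open MeasureTheory ProbabilityTheory Set

theorem MeasureTheory.Measure.conv_eq_self_of_isAddLeftInvariant {G : Type*} [AddGroup G]
    [MeasurableSpace G] [MeasurableAdd₂ G] (ν ρ : Measure G) [IsProbabilityMeasure ν]
    [ρ.IsAddLeftInvariant] [SFinite ρ] :
    ν ∗ ρ = ρ := by
  ext s hs
  have h_inner (x : G) : ∫⁻ y, s.indicator 1 (x + y) ∂ρ = ρ s := by
    rw [← measure_preimage_add ρ x s, ← lintegral_indicator_one (measurable_const_add x hs)]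
    rfl
  rw [← lintegral_indicator_one hs, Measure.lintegral_conv (measurable_one.indicator hs)]
  simp only [h_inner, lintegral_const, measure_univ, mul_one]

theorem ProbabilityTheory.IndepFun.map_add_eq_of_map_right_eq {Ω G : Type*} [MeasurableSpace Ω]
    {μ : Measure Ω} [IsProbabilityMeasure μ] [AddGroup G] [MeasurableSpace G] [MeasurableAdd₂ G]
    {U V : Ω → G} (hU : Measurable U) (hV : Measurable V) (hUV : IndepFun U V μ)
    {ρ : Measure G} [ρ.IsAddLeftInvariant] [SFinite ρ] (hVρ : μ.map V = ρ) :
    μ.map (U + V) = ρ := by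
  have := Measure.isProbabilityMeasure_map (μ := μ) hU.aemeasurable
  rw [hUV.map_add_eq_map_conv_map hU hV, hVρ, Measure.conv_eq_self_of_isAddLeftInvariant]

namespace UnitAddCircle

theorem measurePreserving_mk_Ico :
    MeasurePreserving ((↑) : ℝ → UnitAddCircle) (volume.restrict (Ico 0 1)) volume := by
  simpa [Measure.restrict_congr_set Ico_ae_eq_Ioc] using UnitAddCircle.measurePreserving_mk 0

theorem coe_fract (y : ℝ) : ((Int.fract y : ℝ) : UnitAddCircle) = y := by
  rw [Int.fract, AddCircle.coe_sub]
  simp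

noncomputable def fractRep (z : UnitAddCircle) : ℝ :=
  AddCircle.equivIco 1 0 z

theorem measurable_fractRep : Measurable fractRep :=
  measurable_subtype_coe.comp (AddCircle.measurableEquivIco 1 0).measurable

theorem fractRep_coe (y : ℝ) : fractRep y = Int.fract y := by
  simp [fractRep]

end UnitAddCircle

section FractLaw

variable {Ω : Type*} [MeasurableSpace Ω] {μ : Measure Ω} {Y : Ω → ℝ}

theorem map_fract_eq_iff_map_coe_eq (hY : Measurable Y) :
    μ.map (fun ω => Int.fract (Y ω)) = volume.restrict (Ico 0 1) ↔
      μ.map (fun ω => (Y ω : UnitAddCircle)) = volume := by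
  have hY_circle : Measurable fun ω => (Y ω : UnitAddCircle) := AddCircle.measurable_mk'.comp hY
  have h_coe : μ.map (fun ω => (Y ω : UnitAddCircle)) =
      (μ.map (fun ω => Int.fract (Y ω))).map (↑) := by
    rw [Measure.map_map AddCircle.measurable_mk' hY.fract]
    simp only [Function.comp_def, UnitAddCircle.coe_fract]
  have h_fract : μ.map (fun ω => Int.fract (Y ω)) =
      (μ.map (fun ω => (Y ω : UnitAddCircle))).map UnitAddCircle.fractRep := by
    rw [Measure.map_map UnitAddCircle.measurable_fractRep hY_circle]
    simp only [Function.comp_def, UnitAddCircle.fractRep_coe]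
  constructor
  · intro h
    rw [h_coe, h, UnitAddCircle.measurePreserving_mk_Ico.map_eq]
  · intro h
    have h_ae : Int.fract =ᵐ[volume.restrict (Ico (0 : ℝ) 1)] id :=
      ae_restrict_of_forall_mem measurableSet_Ico fun y hy => Int.fract_eq_self.2 hy
    have h_id : (volume.restrict (Ico (0 : ℝ) 1)).map Int.fract = volume.restrict (Ico 0 1) := by
      rw [Measure.map_congr h_ae, Measure.map_id]
    rw [h_fract, h, ← UnitAddCircle.measurePreserving_mk_Ico.map_eq,
      Measure.map_map UnitAddCircle.measurable_fractRep AddCircle.measurable_mk']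
    simpa only [Function.comp_def, UnitAddCircle.fractRep_coe] using h_id

theorem map_fract_eq_iff_forall_measure_fract_le [IsProbabilityMeasure μ] (hY : Measurable Y) :
    μ.map (fun ω => Int.fract (Y ω)) = volume.restrict (Ico 0 1) ↔
      ∀ s : ℝ, 0 ≤ s → s < 1 → μ {ω | Int.fract (Y ω) ≤ s} = ENNReal.ofReal s := by
  have h_apply (a : ℝ) : μ.map (fun ω => Int.fract (Y ω)) (Iic a) = μ {ω | Int.fract (Y ω) ≤ a} :=
    Measure.map_apply hY.fract measurableSet_Iic
  constructor
  · intro h s hs0 hs1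
    have h_set : Iic s ∩ Ico 0 1 = Icc 0 s := by ext; simp; grind
    rw [← h_apply, h, Measure.restrict_apply measurableSet_Iic, h_set, Real.volume_Icc, sub_zero]
  · intro h
    have := Measure.isProbabilityMeasure_map (μ := μ) hY.fract.aemeasurable
    refine Measure.ext_of_Iic _ _ fun a => ?_
    rw [h_apply, Measure.restrict_apply measurableSet_Iic]
    rcases lt_or_ge a 0 with ha0 | ha0
    · have h_set : Iic a ∩ Ico 0 1 = ∅ := by ext; simp; grind
      have h_pre : {ω | Int.fract (Y ω) ≤ a} = ∅ :=
        eq_empty_of_forall_notMem fun ω (hω : Int.fract (Y ω) ≤ a) =>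
          by linarith [Int.fract_nonneg (Y ω)]
      rw [h_set, h_pre, measure_empty, measure_empty]
    rcases lt_or_ge a 1 with ha1 | ha1
    · have h_set : Iic a ∩ Ico 0 1 = Icc 0 a := by ext; simp; grind
      rw [h a ha0 ha1, h_set, Real.volume_Icc, sub_zero]
    · have h_set : Iic a ∩ Ico 0 1 = Ico 0 1 := by ext; simp; grind
      have h_pre : {ω | Int.fract (Y ω) ≤ a} = univ :=
        eq_univ_of_forall fun ω => (Int.fract_lt_one (Y ω)).le.trans ha1
      rw [h_set, h_pre, Real.volume_Ico, measure_univ, sub_zero, ENNReal.ofReal_one]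

end FractLaw

theorem Real.measurable_logb (b : ℝ) : Measurable (Real.logb b) :=
  Real.measurable_log.div_const _

section Benford

variable {Ω : Type*} [MeasurableSpace Ω] {μ : Measure Ω}

theorem S_le_iff_fract_logb_le (x : ℝ) {t : ℝ} (ht : 1 ≤ t) :
    S x ≤ t ↔ Int.fract (Real.logb 10 x) ≤ Real.logb 10 t := by
  rcases eq_or_ne x 0 with rfl | hx
  -- junk values: `S 0 = 0` and `Real.logb 10 0 = 0`, so both sides hold
  · simp [S, Real.logb_nonneg (by norm_num : (1 : ℝ) < 10) ht, zero_le_one.trans ht]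
  · rw [S, if_neg hx, Real.logb_abs]
    conv_lhs => rw [← Real.rpow_logb (b := 10) (by norm_num) (by norm_num) (by linarith : 0 < t)]
    exact Real.rpow_le_rpow_left_iff (by norm_num)

theorem benfordRV_iff_forall_measure_fract_logb_le (X : Ω → ℝ) :
    BenfordRV μ X ↔ ∀ s : ℝ, 0 ≤ s → s < 1 →
      μ {ω | Int.fract (Real.logb 10 (X ω)) ≤ s} = ENNReal.ofReal s := by
  have h_set (t : ℝ) (ht : 1 ≤ t) :
      {ω | S (X ω) ≤ t} = {ω | Int.fract (Real.logb 10 (X ω)) ≤ Real.logb 10 t} :=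
    ext fun ω => S_le_iff_fract_logb_le (X ω) ht
  constructor
  · intro h s hs0 hs1
    have ht1 : 1 ≤ (10 : ℝ) ^ s := Real.one_le_rpow (by norm_num) hs0
    have ht10 : (10 : ℝ) ^ s < 10 := by
      simpa using Real.rpow_lt_rpow_of_exponent_lt (by norm_num : (1 : ℝ) < 10) hs1
    simpa [h_set _ ht1, Real.logb_rpow] using h _ ht1 ht10
  · intro h t ht1 ht10
    rw [h_set t ht1]
    refine h _ (Real.logb_nonneg (by norm_num) ht1) ?_
    simpa using Real.logb_lt_logb (by norm_num : (1 : ℝ) < 10) (by linarith) ht10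

theorem benfordRV_iff_map_logb_eq_volume [IsProbabilityMeasure μ] {X : Ω → ℝ}
    (hX : Measurable X) :
    BenfordRV μ X ↔ μ.map (fun ω => (Real.logb 10 (X ω) : UnitAddCircle)) = volume := by
  have hY : Measurable fun ω => Real.logb 10 (X ω) := (Real.measurable_logb 10).comp hX
  rw [benfordRV_iff_forall_measure_fract_logb_le, ← map_fract_eq_iff_forall_measure_fract_le hY,
    map_fract_eq_iff_map_coe_eq hY]

theorem benfordRV_mul_of_indepFun [IsProbabilityMeasure μ] {X Y : Ω → ℝ}
    (hX : Measurable X) (hY : Measurable Y) (hX0 : ∀ ω, X ω ≠ 0) (hY0 : ∀ ω, Y ω ≠ 0)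
    (hXY : IndepFun X Y μ) (hYB : BenfordRV μ Y) :
    BenfordRV μ (fun ω => X ω * Y ω) := by
  have h_circle : Measurable fun x : ℝ => (Real.logb 10 x : UnitAddCircle) :=
    AddCircle.measurable_mk'.comp (Real.measurable_logb 10)
  have h_log : (fun ω => (Real.logb 10 (X ω * Y ω) : UnitAddCircle)) =
      (fun ω => (Real.logb 10 (X ω) : UnitAddCircle)) +
        fun ω => (Real.logb 10 (Y ω) : UnitAddCircle) :=
    funext fun ω => by simp [Real.logb_mul (hX0 ω) (hY0 ω)]
  rw [benfordRV_iff_map_logb_eq_volume hY] at hYB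
  rw [benfordRV_iff_map_logb_eq_volume (X := fun ω => X ω * Y ω) (hX.mul hY), h_log]
  exact (hXY.comp h_circle h_circle).map_add_eq_of_map_right_eq (h_circle.comp hX)
    (h_circle.comp hY) hYB

end Benford

/-- If `X₁, X₂, …` are independent positive random variables and `X j`
is Benford, then `X₁ ⋯ X m` is Benford for every `m ≥ j`. -/
theorem benfordRV_prod_of_indep {Ω : Type*} [MeasurableSpace Ω]
    (μ : Measure Ω) [IsProbabilityMeasure μ] (X : ℕ → Ω → ℝ)
    (hmeas : ∀ i, Measurable (X i))
    (hindep : ProbabilityTheory.iIndepFun X μ)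
    (hpos : ∀ i ω, 0 < X i ω)
    (j : ℕ) (hj : 1 ≤ j) (hXj : BenfordRV μ (X j))
    (m : ℕ) (hm : j ≤ m) :
    BenfordRV μ (fun ω => ∏ i ∈ Finset.Icc 1 m, X i ω) := by
  have hj_mem : j ∈ Finset.Icc 1 m := Finset.mem_Icc.2 ⟨hj, hm⟩
  have h_indep : IndepFun (fun ω => ∏ i ∈ (Finset.Icc 1 m).erase j, X i ω) (X j) μ := by
    simpa only [Finset.prod_fn] using
      hindep.indepFun_finsetProd_of_notMem hmeas (Finset.notMem_erase j _)
  simp_rw [← Finset.prod_erase_mul _ _ hj_mem]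
  exact benfordRV_mul_of_indepFun (Finset.measurable_prod _ fun i _ => hmeas i) (hmeas j)
    (fun ω => (Finset.prod_pos fun i _ => hpos i ω).ne') (fun ω => (hpos j ω).ne') h_indep hXj
end
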